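/- (Key step of Claim 1.) Let h₀ : U → ℝ ∪ {+∞} be proper, u, φ : [t,T) → U measurable with φ integrable against admissible variations. If for every measurable E ⊆ [t,T) and every w ∈ L^p_λ(t,T;U) one has ∫_E [h₀(w(τ)) - h₀(u(τ)) - (φ(τ)|w(τ)-u(τ))_U] dτ ≥ 0, then h₀(w) - h₀(u(τ)) - (φ(τ)|w - u(τ))_U ≥ 0 for a.e. τ and every w ∈ U, i.e., φ(τ) ∈ ∂h₀(u(τ)) a.e. -/

import Mathlib

open MeasureTheory Set TopologicalSpace
open scoped InnerProductSpace ENNReal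

/-! Testing the hypothesis with the constant variation `w = z` shows, for each fixed `z`, that the
integrand is nonnegative a.e.; the exceptional null set depends on `z`. The inequality is a closed
condition on `(h₀ (u τ), u τ, φ τ)`, which ranges over a separable set, so countably many `z`
suffice and the null sets can be united. -/

section

variable {α : Type*} [MeasurableSpace α] {μ : Measure α}

theorem ae_nonneg_of_forall_setIntegral_nonneg_of_integrableOn [IsFiniteMeasure μ]
    {f : α → ℝ} (hf : Measurable f)
    (h : ∀ s, MeasurableSet s → IntegrableOn f s μ → 0 ≤ ∫ x in s, f x ∂μ) :
    ∀ᵐ x ∂μ, 0 ≤ f x := by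
  set t : ℕ → Set α := fun n => {x | |f x| ≤ n}
  have ht : ∀ n, MeasurableSet (t n) := fun n => measurableSet_le hf.abs measurable_const
  have hft : ∀ n, IntegrableOn f (t n) μ := fun n =>
    Measure.integrableOn_of_bounded (M := n) (measure_ne_top μ _) hf.aestronglyMeasurable
      ((ae_restrict_iff' (ht n)).mpr (ae_of_all _ fun _ hx => hx))
  have hcover : ⋃ n, t n = univ :=
    eq_univ_of_forall fun x => mem_iUnion.mpr (exists_nat_ge |f x|)
  have hpieces : ∀ n, 0 ≤ᵐ[μ.restrict (t n)] f := fun n =>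
    ae_nonneg_restrict_of_forall_setIntegral_nonneg_inter (hft n) fun s hs _ =>
      h _ (hs.inter (ht n)) ((hft n).mono_set inter_subset_right)
  simpa [hcover] using (ae_restrict_iUnion_iff t fun x => 0 ≤ f x).mpr hpieces

theorem ContinuousOn.memLp_restrict_of_isCompact {X E : Type*} [TopologicalSpace X]
    [MeasurableSpace X] [OpensMeasurableSpace X] {μ : Measure X} [IsFiniteMeasureOnCompacts μ]
    [NormedAddCommGroup E] {f : X → E} {K : Set X} (hK : IsCompact K) (hKm : MeasurableSet K)
    (hf : ContinuousOn f K) (q : ℝ≥0∞) : MemLp f q (μ.restrict K) := by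
  have : IsFiniteMeasure (μ.restrict K) := isFiniteMeasure_restrict.mpr hK.measure_lt_top.ne
  obtain ⟨C, hC⟩ := hK.exists_bound_of_continuousOn hf
  exact MemLp.of_bound (hf.aestronglyMeasurable_of_isCompact hK hKm) C
    ((ae_restrict_iff' hKm).mpr (ae_of_all _ hC))

-- On the separable, hence second countable, range of `q`, countably many of the open sets
-- `(F i)ᶜ` already cover their union (Lindelöf).
theorem ae_forall_mem_of_isClosed {X ι : Type*} [TopologicalSpace X] [PseudoMetrizableSpace X]
    {q : α → X} (hq : IsSeparable (range q)) {F : ι → Set X} (hF : ∀ i, IsClosed (F i))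
    (h : ∀ i, ∀ᵐ a ∂μ, q a ∈ F i) : ∀ᵐ a ∂μ, ∀ i, q a ∈ F i := by
  have := hq.secondCountableTopology
  obtain ⟨J, hJ, hcover⟩ := isOpen_iUnion_countable (fun i => ((↑) : range q → X) ⁻¹' (F i)ᶜ)
    fun i => (hF i).isOpen_compl.preimage continuous_subtype_val
  filter_upwards [(ae_ball_iff hJ).mpr fun i _ => h i] with a ha i
  by_contra hi
  have hmem : (⟨q a, mem_range_self a⟩ : range q) ∈ ⋃ i, ((↑) : range q → X) ⁻¹' (F i)ᶜ :=
    mem_iUnion.mpr ⟨i, hi⟩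
  rw [← hcover] at hmem
  obtain ⟨j, hj, hqj⟩ := mem_iUnion₂.mp hmem
  exact hqj (ha j hj)

end

theorem pointwise_subgradient_from_integral_general
    {U : Type*} [NormedAddCommGroup U] [InnerProductSpace ℝ U]
    (t T lam p : ℝ)
    (h₀ : U → ℝ) (hlsc : LowerSemicontinuous h₀)
    (u φ : ℝ → U) (hu : StronglyMeasurable u) (hφ : StronglyMeasurable φ)
    (hyp : ∀ E : Set ℝ, MeasurableSet E → E ⊆ Set.Ico t T →
      ∀ w : ℝ → U,
        MemLp (fun τ => Real.exp (-lam * τ / p) • w τ)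
          (ENNReal.ofReal p) (volume.restrict (Set.Ico t T)) →
        IntegrableOn
          (fun τ => h₀ (w τ) - h₀ (u τ) - ⟪φ τ, w τ - u τ⟫_ℝ) E →
        0 ≤ ∫ τ in E, (h₀ (w τ) - h₀ (u τ) - ⟪φ τ, w τ - u τ⟫_ℝ)) :
    ∀ᵐ τ ∂(volume.restrict (Set.Ico t T)),
      ∀ z : U, 0 ≤ h₀ z - h₀ (u τ) - ⟪φ τ, z - u τ⟫_ℝ := by
  borelize U
  have hh₀u : StronglyMeasurable fun τ => h₀ (u τ) :=
    (hlsc.measurable.comp hu.measurable).stronglyMeasurable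
  have hconst : ∀ z : U, ∀ᵐ τ ∂(volume.restrict (Ico t T)),
      0 ≤ h₀ z - h₀ (u τ) - ⟪φ τ, z - u τ⟫_ℝ := by
    intro z
    have hweight : MemLp (fun τ => Real.exp (-lam * τ / p) • z) (ENNReal.ofReal p)
        (volume.restrict (Ico t T)) :=
      (ContinuousOn.memLp_restrict_of_isCompact isCompact_Icc measurableSet_Icc
        (by fun_prop) _).mono_measure
        (Measure.restrict_mono Ico_subset_Icc_self le_rfl)
    refine ae_nonneg_of_forall_setIntegral_nonneg_of_integrableOn
      ((measurable_const.sub hh₀u.measurable).sub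
        (hφ.inner (stronglyMeasurable_const.sub hu)).measurable) fun s hs hint => ?_
    rw [IntegrableOn, Measure.restrict_restrict hs] at hint
    rw [Measure.restrict_restrict hs]
    exact hyp _ (hs.inter measurableSet_Ico) inter_subset_right (fun _ => z) hweight hint
  exact ae_forall_mem_of_isClosed (q := fun τ => (h₀ (u τ), u τ, φ τ))
    (hh₀u.prodMk (hu.prodMk hφ)).isSeparable_range
    (F := fun z => {x : ℝ × U × U | 0 ≤ h₀ z - x.1 - ⟪x.2.2, z - x.2.1⟫_ℝ})
    (fun z => isClosed_le continuous_const (by fun_prop)) hconst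

/-- Key step of Claim 1: if for every measurable `E ⊆ [t,T)` and every
`w ∈ L^p_λ(t,T;U)` one has
`∫_E [h₀(w(τ)) - h₀(u(τ)) - (φ(τ)|w(τ)-u(τ))] dτ ≥ 0`,
then `φ(τ) ∈ ∂h₀(u(τ))` for a.e. `τ ∈ [t,T)`. -/
theorem pointwise_subgradient_from_integral
    {U : Type*} [NormedAddCommGroup U] [InnerProductSpace ℝ U] [CompleteSpace U]
    (t T lam p : ℝ) (hT : t < T) (hlam : 0 < lam) (hp : 2 ≤ p)
    (h₀ : U → ℝ) (hconv : ConvexOn ℝ Set.univ h₀) (hlsc : LowerSemicontinuous h₀)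
    (u φ : ℝ → U) (hu : StronglyMeasurable u) (hφ : StronglyMeasurable φ)
    (hyp : ∀ E : Set ℝ, MeasurableSet E → E ⊆ Set.Ico t T →
      ∀ w : ℝ → U,
        MemLp (fun τ => Real.exp (-lam * τ / p) • w τ)
          (ENNReal.ofReal p) (volume.restrict (Set.Ico t T)) →
        IntegrableOn
          (fun τ => h₀ (w τ) - h₀ (u τ) - ⟪φ τ, w τ - u τ⟫_ℝ) E →
        0 ≤ ∫ τ in E, (h₀ (w τ) - h₀ (u τ) - ⟪φ τ, w τ - u τ⟫_ℝ)) :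
    ∀ᵐ τ ∂(volume.restrict (Set.Ico t T)),
      ∀ z : U, 0 ≤ h₀ z - h₀ (u τ) - ⟪φ τ, z - u τ⟫_ℝ :=
  pointwise_subgradient_from_integral_general t T lam p h₀ hlsc u φ hu hφ hyp
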